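/- Let n ≥ 3 be an odd integer. (1) For θ ∈ [0,π), if Φ_n^θ has a critical zero, then θ = θ(i,j) for some 1 ≤ i, j ≤ n−1; in particular, the set of θ ∈ [0,π) for which Φ_n^θ has a critical zero is finite. (2) If θ₀ = θ(i₀,j₀) for some 1 ≤ i₀, j₀ ≤ n−1, then the critical zeros of Φ_n^{θ₀} are exactly the points (t_{n−1,i}, t_{n−1,j}) with 1 ≤ i, j ≤ n−1 satisfying cos θ₀·H_n(t_{n−1,i}) + sin θ₀·H_n(t_{n−1,j}) = 0; among them is the point (t_{n−1,i₀}, t_{n−1,j₀}), and Φ_n^{θ₀} has only finitely many critical zeros. -/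

import Mathlib

open Polynomial Real Set

/-- Physicists' Hermite polynomials: `H 0 = 1`, `H 1 = 2X`,
`H (n+2) = 2X * H (n+1) - 2(n+1) * H n`. -/
noncomputable def hermiteH : ℕ → Polynomial ℝ
  | 0 => 1
  | 1 => Polynomial.C 2 * Polynomial.X
  | (n + 2) => Polynomial.C 2 * Polynomial.X * hermiteH (n + 1)
      - Polynomial.C ((2 * (n + 1) : ℕ) : ℝ) * hermiteH n

/-- `z : Fin m → ℝ` enumerates the zeros of `P` in increasing order. -/
def IsZeroEnum (P : Polynomial ℝ) (m : ℕ) (z : Fin m → ℝ) : Prop :=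
  StrictMono z ∧ (∀ i, P.eval (z i) = 0) ∧ (∀ x : ℝ, P.eval x = 0 → ∃ i, x = z i)

/-- The eigenfunction `Φ_n^θ`. -/
noncomputable def Phi (n : ℕ) (θ : ℝ) (p : ℝ × ℝ) : ℝ :=
  (Real.cos θ * (hermiteH n).eval p.1 + Real.sin θ * (hermiteH n).eval p.2) *
    Real.exp (-(p.1 ^ 2 + p.2 ^ 2) / 2)

/-- A critical zero of `u` : a common zero of `u` and its differential. -/
def IsCriticalZero (u : ℝ × ℝ → ℝ) (p : ℝ × ℝ) : Prop :=
  u p = 0 ∧ fderiv ℝ u p = 0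

/-- Nodal set of `u`. -/
def nodalSet (u : ℝ × ℝ → ℝ) : Set (ℝ × ℝ) := {p | u p = 0}

/-- The set of nodal domains of `u`, i.e. of connected components of the
complement of the nodal set. -/
def nodalDomains (u : ℝ × ℝ → ℝ) : Set (Set (ℝ × ℝ)) :=
  {C | ∃ p, u p ≠ 0 ∧ C = connectedComponentIn {q | u q ≠ 0} p}

/-! Since `∂ₓ Φ_n^θ = cos θ · 2n H_{n-1}(x) e^{…}` at a zero of `Φ_n^θ`, and consecutive Hermite
polynomials have no common root, a critical zero forces `cos θ ≠ 0 ≠ sin θ` and hence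
`H_{n-1}(x) = H_{n-1}(y) = 0`. So the critical zeros lie on the finite grid of zeros of `H_{n-1}`,
and on each grid point `(t_i, t_j)` the vanishing of `Φ_n^θ` pins down `θ ∈ [0, π)` uniquely,
because `H_n(t_i) ≠ 0`. -/

theorem hermiteH_add_two (n : ℕ) :
    hermiteH (n + 2) = C 2 * X * hermiteH (n + 1) - C ((2 * (n + 1) : ℕ) : ℝ) * hermiteH n :=
  rfl

theorem derivative_hermiteH_succ :
    ∀ n : ℕ, derivative (hermiteH (n + 1)) = C (2 * (n + 1) : ℝ) * hermiteH n
  | 0 => by simp [hermiteH]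
  | 1 => by simp [hermiteH, map_ofNat]; ring
  | n + 2 => by
    have hrec := hermiteH_add_two n
    rw [hermiteH_add_two]
    simp only [derivative_sub, derivative_mul, derivative_X, derivative_ofNat, derivative_natCast,
      derivative_one, derivative_hermiteH_succ (n + 1), derivative_hermiteH_succ n, map_mul,
      map_add, map_natCast, map_ofNat, map_one, Nat.cast_mul, Nat.cast_add, Nat.cast_ofNat,
      Nat.cast_one] at hrec ⊢
    linear_combination (-2 * ((n : ℝ[X]) + 2)) * hrec

theorem eval_hermiteH_succ_ne_zero_of_eval_eq_zero :
    ∀ {n : ℕ} {x : ℝ}, (hermiteH n).eval x = 0 → (hermiteH (n + 1)).eval x ≠ 0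
  | 0, x, h => by simp [hermiteH] at h
  | n + 1, x, h => by
    intro h'
    have hrec := congrArg (eval x) (hermiteH_add_two n)
    simp only [h, h', eval_sub, eval_mul, eval_C, eval_X, mul_zero, zero_sub, zero_eq_neg,
      mul_eq_zero] at hrec
    exact eval_hermiteH_succ_ne_zero_of_eval_eq_zero (hrec.resolve_left (by positivity)) h

theorem IsZeroEnum.eval_eq_zero_iff {P : ℝ[X]} {m : ℕ} {z : Fin m → ℝ} (hz : IsZeroEnum P m z)
    (x : ℝ) : P.eval x = 0 ↔ ∃ i, x = z i :=
  ⟨hz.2.2 x, by rintro ⟨i, rfl⟩; exact hz.2.1 i⟩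

theorem isCriticalZero_mul_iff {f g : ℝ × ℝ → ℝ} {p : ℝ × ℝ} (hf : DifferentiableAt ℝ f p)
    (hg : DifferentiableAt ℝ g p) (hgp : g p ≠ 0) :
    IsCriticalZero (fun q => f q * g q) p ↔ IsCriticalZero f p := by
  simp only [IsCriticalZero, mul_eq_zero, hgp, or_false]
  rw [fderiv_fun_mul hf hg]
  refine and_congr_right fun hfp => ?_
  rw [hfp, zero_smul, zero_add, smul_eq_zero, or_iff_right hgp]

theorem isCriticalZero_add_comp_fst_snd_iff {f g : ℝ → ℝ} {p : ℝ × ℝ}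
    (hf : DifferentiableAt ℝ f p.1) (hg : DifferentiableAt ℝ g p.2) :
    IsCriticalZero (fun q => f q.1 + g q.2) p ↔
      f p.1 + g p.2 = 0 ∧ deriv f p.1 = 0 ∧ deriv g p.2 = 0 := by
  have hderiv : HasFDerivAt (fun q : ℝ × ℝ => f q.1 + g q.2)
      (deriv f p.1 • ContinuousLinearMap.fst ℝ ℝ ℝ
        + deriv g p.2 • ContinuousLinearMap.snd ℝ ℝ ℝ) p :=
    (hf.hasDerivAt.comp_hasFDerivAt p hasFDerivAt_fst).add
      (hg.hasDerivAt.comp_hasFDerivAt p hasFDerivAt_snd)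
  rw [IsCriticalZero, hderiv.fderiv]
  refine and_congr_right fun _ => ⟨fun h => ⟨?_, ?_⟩, fun ⟨h₁, h₂⟩ => by simp [h₁, h₂]⟩
  · simpa using DFunLike.congr_fun h (1, 0)
  · simpa using DFunLike.congr_fun h (0, 1)

theorem isCriticalZero_Phi_succ_iff (m : ℕ) (θ : ℝ) (p : ℝ × ℝ) :
    IsCriticalZero (Phi (m + 1) θ) p ↔
      cos θ * (hermiteH (m + 1)).eval p.1 + sin θ * (hermiteH (m + 1)).eval p.2 = 0 ∧
        cos θ * (hermiteH m).eval p.1 = 0 ∧ sin θ * (hermiteH m).eval p.2 = 0 := by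
  have hm : (2 * (m + 1) : ℝ) ≠ 0 := by positivity
  unfold Phi
  rw [isCriticalZero_mul_iff (by fun_prop) (by fun_prop) (exp_ne_zero _),
    isCriticalZero_add_comp_fst_snd_iff (f := fun x => cos θ * (hermiteH (m + 1)).eval x)
      (g := fun y => sin θ * (hermiteH (m + 1)).eval y) (by fun_prop) (by fun_prop)]
  simp only [deriv_const_mul_field', Polynomial.deriv, derivative_hermiteH_succ, eval_mul, eval_C,
    mul_left_comm _ (2 * ((m : ℝ) + 1)), mul_eq_zero, hm, false_or]

theorem isCriticalZero_Phi_iff {n : ℕ} (hn : n ≠ 0) (θ : ℝ) (p : ℝ × ℝ) :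
    IsCriticalZero (Phi n θ) p ↔
      (hermiteH (n - 1)).eval p.1 = 0 ∧ (hermiteH (n - 1)).eval p.2 = 0 ∧
        cos θ * (hermiteH n).eval p.1 + sin θ * (hermiteH n).eval p.2 = 0 := by
  obtain ⟨m, rfl⟩ := Nat.exists_eq_add_one_of_ne_zero hn
  rw [isCriticalZero_Phi_succ_iff, Nat.add_sub_cancel]
  constructor
  · rintro ⟨hsum, hx, hy⟩
    have hcs : cos θ ≠ 0 ∨ sin θ ≠ 0 := by
      by_contra! h
      simpa [h.1, h.2] using sin_sq_add_cos_sq θ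
    have hc : cos θ ≠ 0 := by
      intro hc
      have hs : sin θ ≠ 0 := hcs.resolve_left (not_not.2 hc)
      simp only [hc, zero_mul, zero_add, mul_eq_zero, hs, false_or] at hsum
      exact eval_hermiteH_succ_ne_zero_of_eval_eq_zero ((mul_eq_zero.1 hy).resolve_left hs) hsum
    have hx' := (mul_eq_zero.1 hx).resolve_left hc
    have hs : sin θ ≠ 0 := by
      intro hs
      simp only [hs, zero_mul, add_zero, mul_eq_zero, hc, false_or] at hsum
      exact eval_hermiteH_succ_ne_zero_of_eval_eq_zero hx' hsum
    exact ⟨hx', (mul_eq_zero.1 hy).resolve_left hs, hsum⟩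
  · rintro ⟨hx, hy, hsum⟩
    exact ⟨hsum, by simp [hx], by simp [hy]⟩

theorem setOf_isCriticalZero_Phi {n m : ℕ} (hn : n ≠ 0) {tz : Fin m → ℝ}
    (htz : IsZeroEnum (hermiteH (n - 1)) m tz) (θ : ℝ) :
    {p | IsCriticalZero (Phi n θ) p} =
      {p | ∃ i j, p = (tz i, tz j) ∧
        cos θ * (hermiteH n).eval (tz i) + sin θ * (hermiteH n).eval (tz j) = 0} := by
  ext ⟨x, y⟩
  simp only [mem_ofPred_eq, isCriticalZero_Phi_iff hn, htz.eval_eq_zero_iff, Prod.mk.injEq]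
  constructor
  · rintro ⟨⟨i, rfl⟩, ⟨j, rfl⟩, h⟩
    exact ⟨i, j, ⟨rfl, rfl⟩, h⟩
  · rintro ⟨i, j, ⟨rfl, rfl⟩, h⟩
    exact ⟨⟨i, rfl⟩, ⟨j, rfl⟩, h⟩

theorem eq_of_cos_mul_add_sin_mul_eq_zero {a b θ θ' : ℝ} (ha : a ≠ 0) (hθ : θ ∈ Ico 0 π)
    (hθ' : θ' ∈ Ico 0 π) (h : cos θ * a + sin θ * b = 0) (h' : cos θ' * a + sin θ' * b = 0) :
    θ = θ' := by
  obtain ⟨hθ₀, hθπ⟩ := hθ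
  obtain ⟨hθ₀', hθπ'⟩ := hθ'
  have hsin : sin (θ' - θ) * a = 0 := by
    rw [sin_sub]
    linear_combination sin θ' * h - sin θ * h'
  have := (sin_eq_zero_iff_of_lt_of_lt (by linarith) (by linarith)).1
    ((mul_eq_zero.1 hsin).resolve_right ha)
  linarith

theorem critical_zeros_classification_general
    (n : ℕ) (hn3 : 3 ≤ n)
    (tz : Fin (n - 1) → ℝ) (htz : IsZeroEnum (hermiteH (n - 1)) (n - 1) tz)
    (Θ : Fin (n - 1) → Fin (n - 1) → ℝ)
    (hΘ : ∀ i j, Θ i j ∈ Set.Ioo 0 π ∧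
      Real.cos (Θ i j) * (hermiteH n).eval (tz i)
        + Real.sin (Θ i j) * (hermiteH n).eval (tz j) = 0) :
    (∀ θ ∈ Set.Ico (0:ℝ) π, (∃ p : ℝ × ℝ, IsCriticalZero (Phi n θ) p) →
        ∃ i j, θ = Θ i j) ∧
    {θ ∈ Set.Ico (0:ℝ) π | ∃ p : ℝ × ℝ, IsCriticalZero (Phi n θ) p}.Finite ∧
    (∀ i₀ j₀ : Fin (n - 1),
      ({p : ℝ × ℝ | IsCriticalZero (Phi n (Θ i₀ j₀)) p} =
        {p : ℝ × ℝ | ∃ i j, p = (tz i, tz j) ∧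
          Real.cos (Θ i₀ j₀) * (hermiteH n).eval (tz i)
            + Real.sin (Θ i₀ j₀) * (hermiteH n).eval (tz j) = 0}) ∧
      IsCriticalZero (Phi n (Θ i₀ j₀)) (tz i₀, tz j₀) ∧
      {p : ℝ × ℝ | IsCriticalZero (Phi n (Θ i₀ j₀)) p}.Finite) := by
  have hn : n ≠ 0 := by omega
  have hcrit := setOf_isCriticalZero_Phi hn htz
  have hHn (i) : (hermiteH n).eval (tz i) ≠ 0 :=
    Nat.sub_one_add_one hn ▸ eval_hermiteH_succ_ne_zero_of_eval_eq_zero (htz.2.1 i)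
  have hΘ_of_crit (θ) (hθ : θ ∈ Ico 0 π) (hp : ∃ p, IsCriticalZero (Phi n θ) p) :
      ∃ i j, θ = Θ i j := by
    obtain ⟨p, hp⟩ := hp
    obtain ⟨i, j, -, h⟩ := (hcrit θ).subset hp
    exact ⟨i, j, eq_of_cos_mul_add_sin_mul_eq_zero (hHn i) hθ
      (Ioo_subset_Ico_self (hΘ i j).1) h (hΘ i j).2⟩
  refine ⟨hΘ_of_crit, ?_, fun i₀ j₀ => ⟨hcrit _, ?_, ?_⟩⟩
  · refine (finite_range fun ij : Fin (n - 1) × Fin (n - 1) => Θ ij.1 ij.2).subset ?_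
    rintro θ ⟨hθ, hp⟩
    obtain ⟨i, j, rfl⟩ := hΘ_of_crit θ hθ hp
    exact ⟨(i, j), rfl⟩
  · exact (isCriticalZero_Phi_iff hn _ _).2 ⟨htz.2.1 i₀, htz.2.1 j₀, (hΘ i₀ j₀).2⟩
  · rw [hcrit]
    refine (finite_range fun ij : Fin (n - 1) × Fin (n - 1) => (tz ij.1, tz ij.2)).subset ?_
    rintro _ ⟨i, j, rfl, -⟩
    exact ⟨(i, j), rfl⟩

/-- Let `n ≥ 3` be odd, `tz` enumerate the zeros of `H_{n-1}`,
and `Θ i j ∈ (0,π)` be the critical values defined by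
`cos (Θ i j) * H_n(tz i) + sin (Θ i j) * H_n(tz j) = 0`.
(1) If `Φ_n^θ` has a critical zero for some `θ ∈ [0,π)`, then `θ = Θ i j` for
some `i j`; in particular, the set of such `θ` is finite.
(2) For `θ₀ = Θ i₀ j₀`, the critical zeros of `Φ_n^{θ₀}` are exactly the points
`(tz i, tz j)` with `cos θ₀ * H_n(tz i) + sin θ₀ * H_n(tz j) = 0`; among them is
`(tz i₀, tz j₀)`, and there are only finitely many of them. -/
theorem critical_zeros_classification
    (n : ℕ) (hn3 : 3 ≤ n) (hodd : Odd n)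
    (tz : Fin (n - 1) → ℝ) (htz : IsZeroEnum (hermiteH (n - 1)) (n - 1) tz)
    (Θ : Fin (n - 1) → Fin (n - 1) → ℝ)
    (hΘ : ∀ i j, Θ i j ∈ Set.Ioo 0 π ∧
      Real.cos (Θ i j) * (hermiteH n).eval (tz i)
        + Real.sin (Θ i j) * (hermiteH n).eval (tz j) = 0) :
    (∀ θ ∈ Set.Ico (0:ℝ) π, (∃ p : ℝ × ℝ, IsCriticalZero (Phi n θ) p) →
        ∃ i j, θ = Θ i j) ∧
    {θ ∈ Set.Ico (0:ℝ) π | ∃ p : ℝ × ℝ, IsCriticalZero (Phi n θ) p}.Finite ∧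
    (∀ i₀ j₀ : Fin (n - 1),
      ({p : ℝ × ℝ | IsCriticalZero (Phi n (Θ i₀ j₀)) p} =
        {p : ℝ × ℝ | ∃ i j, p = (tz i, tz j) ∧
          Real.cos (Θ i₀ j₀) * (hermiteH n).eval (tz i)
            + Real.sin (Θ i₀ j₀) * (hermiteH n).eval (tz j) = 0}) ∧
      IsCriticalZero (Phi n (Θ i₀ j₀)) (tz i₀, tz j₀) ∧
      {p : ℝ × ℝ | IsCriticalZero (Phi n (Θ i₀ j₀)) p}.Finite) :=
  critical_zeros_classification_general n hn3 tz htz Θ hΘ
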